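/- arXiv:2306.06215 — 2 statements merged into one kernel-verified Lean document; each statement's English description precedes it below -/
import Mathlib

section
/- Let G be a graph with a tree decomposition of width w, and let F_1, ..., F_k be spanning forests of G, each a collection of vertex-disjoint rooted trees that are subgraphs of G. For each vertex v, let R_v be the set of roots of trees (over all forests) that contain v; note |R_v| ≤ k. Then adding R_v to every bag containing v yields a valid tree decomposition of G of width at most (k+1)(w+1) - 1, in which for every tree T in some F_i and every vertex v of T, some bag contains both v and the root of T. -/
open SimpleGraph

private lemma reach_mono' {B : Type*} (T : SimpleGraph B) {S S' : Set B}
    (h : S ⊆ S') {a b : ↑S} (hr : (T.induce S).Reachable a b) :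
    (T.induce S').Reachable ⟨a.1, h a.2⟩ ⟨b.1, h b.2⟩ := by
  let f : T.induce S →g T.induce S' := ⟨fun x => ⟨x.1, h x.2⟩, fun hadj => hadj⟩
  exact hr.map f

/-- Augmenting a width-`w` tree decomposition with roots of `k` spanning forests
of rooted trees.  Each forest `i` is described by a function `t i : V → Option V`
sending a vertex to the root of the tree of forest `i` containing it (or `none`);
each tree contains its root and is connected.  Adding, to every bag containing
`v`, the set of roots of trees containing `v` yields a valid tree decomposition
of width at most `(k+1)(w+1) - 1` in which every tree's root shares a bag with
each of that tree's vertices. -/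
theorem augment_tree_decomposition {V B : Type*} [Fintype V] [Fintype B]
    (G : SimpleGraph V) (T : SimpleGraph B) (β : B → Set V) (w k : ℕ)
    (hT : T.IsTree)
    (hcoverV : ∀ v : V, ∃ b, v ∈ β b)
    (hcoverE : ∀ u v : V, G.Adj u v → ∃ b, u ∈ β b ∧ v ∈ β b)
    (hconn : ∀ v : V, (T.induce {b | v ∈ β b}).Connected)
    (hwidth : ∀ b, (β b).ncard ≤ w + 1)
    (t : Fin k → V → Option V)
    (hroot : ∀ i r, (∃ v, t i v = some r) → t i r = some r)
    (htree : ∀ i r, (∃ v, t i v = some r) →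
      (G.induce {v | t i v = some r}).Connected) :
    ∀ β' : B → Set V,
      (∀ b, β' b = β b ∪ {r | ∃ v ∈ β b, ∃ i, t i v = some r}) →
      (∀ v : V, ∃ b, v ∈ β' b) ∧
      (∀ u v : V, G.Adj u v → ∃ b, u ∈ β' b ∧ v ∈ β' b) ∧
      (∀ v : V, (T.induce {b | v ∈ β' b}).Connected) ∧
      (∀ b, (β' b).ncard ≤ (k + 1) * (w + 1)) ∧
      (∀ i v r, t i v = some r → ∃ b, v ∈ β' b ∧ r ∈ β' b) := by
  intro β' hβ'
  have hsub : ∀ b, β b ⊆ β' b := fun b => by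
    rw [hβ' b]; exact Set.subset_union_left
  refine ⟨?_, ?_, ?_, ?_, ?_⟩
  · intro v
    obtain ⟨b, hb⟩ := hcoverV v
    exact ⟨b, hsub b hb⟩
  · intro u v h
    obtain ⟨b, h1, h2⟩ := hcoverE u v h
    exact ⟨b, hsub b h1, hsub b h2⟩
  · -- connectivity
    intro v
    set S' : Set B := {b | v ∈ β' b} with hS'
    have hmem : ∀ b, v ∈ β b → b ∈ S' := fun b hb => by
      simp only [hS', Set.mem_setOf_eq, hβ' b]
      exact Or.inl hb
    have hmem2 : ∀ u b, u ∈ β b → (∃ i, t i u = some v) → b ∈ S' := by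
      rintro u b hb ⟨i, hi⟩
      simp only [hS', Set.mem_setOf_eq, hβ' b]
      exact Or.inr ⟨u, hb, i, hi⟩
    obtain ⟨b0, hb0⟩ := hcoverV v
    have base : ∀ (u : V) (b1 b2 : B) (h1 : u ∈ β b1) (h2 : u ∈ β b2)
        (hsubU : {c | u ∈ β c} ⊆ S') (m1 : b1 ∈ S') (m2 : b2 ∈ S'),
        (T.induce S').Reachable ⟨b1, m1⟩ ⟨b2, m2⟩ := by
      intro u b1 b2 h1 h2 hsubU m1 m2
      have hr := (hconn u).preconnected ⟨b1, h1⟩ ⟨b2, h2⟩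
      exact reach_mono' T hsubU hr
    have key : ∀ (i : Fin k) (x y : {u | t i u = some v})
        (p : (G.induce {u | t i u = some v}).Walk x y),
        ∀ (b1 b2 : B) (h1 : x.1 ∈ β b1) (h2 : y.1 ∈ β b2),
        (T.induce S').Reachable ⟨b1, hmem2 _ _ h1 ⟨i, x.2⟩⟩ ⟨b2, hmem2 _ _ h2 ⟨i, y.2⟩⟩ := by
      intro i x y p
      induction p with
      | @nil u =>
        intro b1 b2 h1 h2
        exact base _ b1 b2 h1 h2 (fun c hc => hmem2 _ c hc ⟨i, u.2⟩) _ _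
      | @cons x z y hadj p ih =>
        intro b1 b2 h1 h2
        obtain ⟨c, hc1, hc2⟩ := hcoverE _ _ hadj
        exact (base _ b1 c h1 hc1 (fun d hd => hmem2 _ d hd ⟨i, x.2⟩) _ _).trans
          (ih c b2 hc2 h2)
    have toB0 : ∀ b (m : b ∈ S'),
        (T.induce S').Reachable ⟨b, m⟩ ⟨b0, hmem b0 hb0⟩ := by
      intro b m
      have hm : v ∈ β b ∨ ∃ u ∈ β b, ∃ i, t i u = some v := by
        have := m
        rw [hS', Set.mem_setOf_eq, hβ' b] at this
        exact this
      rcases hm with hv | ⟨u, hu, i, hi⟩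
      · exact base v b b0 hv hb0 (fun c hc => hmem c hc) _ _
      · have hvr : t i v = some v := hroot i v ⟨u, hi⟩
        obtain ⟨p⟩ := (htree i v ⟨u, hi⟩).preconnected ⟨u, hi⟩ ⟨v, hvr⟩
        exact key i ⟨u, hi⟩ ⟨v, hvr⟩ p b b0 hu hb0
    rw [connected_iff]
    constructor
    · rintro ⟨b1, m1⟩ ⟨b2, m2⟩
      exact (toB0 b1 m1).trans (toB0 b2 m2).symm
    · exact ⟨⟨b0, hmem b0 hb0⟩⟩
  · -- cardinality
    intro b
    classical
    rw [hβ' b]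
    set R : Set V := {r | ∃ v ∈ β b, ∃ i, t i v = some r} with hR
    have hF : (β b).Finite := Set.toFinite _
    set F : Finset V := hF.toFinset with hFdef
    have hFcard : F.card ≤ w + 1 := by
      rw [← Set.ncard_eq_toFinset_card (β b) hF]
      exact hwidth b
    set BigF : Finset V :=
      Finset.univ.biUnion fun i : Fin k => F.biUnion fun u => (t i u).toFinset with hBigF
    have hRsub : R ⊆ ↑BigF := by
      rintro r ⟨u, hu, i, hi⟩
      have hmem : r ∈ BigF := by
        rw [hBigF]
        simp only [Finset.mem_biUnion, Finset.mem_univ, Option.mem_toFinset,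
          Set.Finite.mem_toFinset, Option.mem_def]
        exact ⟨i, trivial, u, (Set.Finite.mem_toFinset hF).mpr hu, hi⟩
      exact hmem
    have hcard : BigF.card ≤ k * (w + 1) := by
      calc BigF.card ≤ ∑ i : Fin k, (F.biUnion fun u => (t i u).toFinset).card :=
            Finset.card_biUnion_le
        _ ≤ ∑ _i : Fin k, (w + 1) := by
            refine Finset.sum_le_sum fun i _ => ?_
            calc (F.biUnion fun u => (t i u).toFinset).card
                ≤ ∑ u ∈ F, (t i u).toFinset.card := Finset.card_biUnion_le
              _ ≤ ∑ _u ∈ F, 1 := Finset.sum_le_sum fun u _ => by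
                  cases t i u <;> simp
              _ = F.card := by simp
              _ ≤ w + 1 := hFcard
        _ = k * (w + 1) := by simp [Finset.sum_const, mul_comm]
    have hRcard : R.ncard ≤ k * (w + 1) := by
      calc R.ncard ≤ (↑BigF : Set V).ncard := Set.ncard_le_ncard hRsub (Set.toFinite _)
        _ = BigF.card := Set.ncard_coe_finset _
        _ ≤ k * (w + 1) := hcard
    calc (β b ∪ R).ncard ≤ (β b).ncard + R.ncard := Set.ncard_union_le _ _
      _ ≤ (w + 1) + k * (w + 1) := add_le_add (hwidth b) hRcard
      _ = (k + 1) * (w + 1) := by ring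
  · intro i v r h
    obtain ⟨b, hb⟩ := hcoverV v
    exact ⟨b, hsub b hb, by rw [hβ' b]; exact Or.inr ⟨v, hb, i, h⟩⟩
end

section
/- Let G be a connected finite weighted graph with positive edge weights, let c_1, ..., c_m be distinct 'centers' in V(G), and assign each vertex v to the center c_{i(v)} minimizing d_G(v, c_i), breaking ties by choosing the smallest index i. Then for every vertex v there exists a shortest path from v to c_{i(v)} all of whose vertices are assigned to the same center c_{i(v)}; consequently each assignment class induces a connected subgraph of G. -/
/-- The weighted length of a walk: the sum of the weights of its edges. -/
def walkWeight {V : Type*} {G : SimpleGraph V} (wt : V → V → ℝ) :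
    ∀ {u v : V}, G.Walk u v → ℝ
  | _, _, SimpleGraph.Walk.nil => 0
  | _, _, SimpleGraph.Walk.cons (u := a) (v := b) _ p => wt a b + walkWeight wt p

/-- The shortest-path distance of a weighted graph: the infimum of the weighted
lengths of walks between two vertices. -/
noncomputable def gDist {V : Type*} (G : SimpleGraph V) (wt : V → V → ℝ)
    (u v : V) : ℝ :=
  sInf {L : ℝ | ∃ p : G.Walk u v, walkWeight wt p = L}

section Aux

variable {V : Type*} [Fintype V] [DecidableEq V] {G : SimpleGraph V} {wt : V → V → ℝ}

lemma walkWeight_nonneg (hpos : ∀ u v : V, G.Adj u v → 0 < wt u v)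
    {u v : V} (p : G.Walk u v) : 0 ≤ walkWeight wt p := by
  induction p with
  | nil => simp [walkWeight]
  | cons h p ih => exact add_nonneg (hpos _ _ h).le ih

lemma walkWeight_append {u v w : V} (p : G.Walk u v) (q : G.Walk v w) :
    walkWeight wt (p.append q) = walkWeight wt p + walkWeight wt q := by
  induction p with
  | nil => simp [walkWeight]
  | cons h p ih => simp [walkWeight, ih, add_assoc]

lemma walkWeight_dropUntil_le (hpos : ∀ u v : V, G.Adj u v → 0 < wt u v)
    {u v : V} (p : G.Walk u v) {w : V} (h : w ∈ p.support) :
    walkWeight wt (p.dropUntil w h) ≤ walkWeight wt p := by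
  conv_rhs => rw [← p.take_spec h]
  rw [walkWeight_append]
  have := walkWeight_nonneg hpos (p.takeUntil w h)
  linarith

lemma walkWeight_bypass_le (hpos : ∀ u v : V, G.Adj u v → 0 < wt u v)
    {u v : V} (p : G.Walk u v) :
    walkWeight wt p.bypass ≤ walkWeight wt p := by
  induction p with
  | nil => simp [SimpleGraph.Walk.bypass, walkWeight]
  | cons h p ih =>
    rw [SimpleGraph.Walk.bypass]
    split_ifs with hs
    · have h1 := walkWeight_dropUntil_le hpos p.bypass hs
      have h2 := (hpos _ _ h).le
      simp only [walkWeight]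
      linarith
    · simp only [walkWeight]
      linarith

lemma gDist_nonneg (hpos : ∀ u v : V, G.Adj u v → 0 < wt u v)
    (hconn : G.Connected) (u v : V) : 0 ≤ gDist G wt u v := by
  obtain ⟨p⟩ := hconn u v
  exact le_csInf ⟨_, p, rfl⟩ (by rintro L ⟨q, rfl⟩; exact walkWeight_nonneg hpos q)

lemma gDist_le (hpos : ∀ u v : V, G.Adj u v → 0 < wt u v)
    {u v : V} (p : G.Walk u v) : gDist G wt u v ≤ walkWeight wt p :=
  csInf_le ⟨0, by rintro L ⟨q, rfl⟩; exact walkWeight_nonneg hpos q⟩ ⟨p, rfl⟩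

lemma exists_shortest_walk (hpos : ∀ u v : V, G.Adj u v → 0 < wt u v)
    (hconn : G.Connected) (u v : V) :
    ∃ p : G.Walk u v, walkWeight wt p = gDist G wt u v := by
  classical
  obtain ⟨p0⟩ := hconn u v
  have hTne : (Set.range fun q : G.Path u v => walkWeight wt q.1).Nonempty :=
    ⟨_, ⟨⟨p0.bypass, p0.bypass_isPath⟩, rfl⟩⟩
  have hTfin : (Set.range fun q : G.Path u v => walkWeight wt q.1).Finite :=
    Set.finite_range _
  obtain ⟨L, hLmem, hLmin⟩ : ∃ L ∈ (Set.range fun q : G.Path u v => walkWeight wt q.1),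
      ∀ L' ∈ (Set.range fun q : G.Path u v => walkWeight wt q.1), id L' ≤ id L → id L = id L' := by
    obtain ⟨L, hL, hm⟩ := Set.Finite.exists_minimalFor id _ hTfin hTne
    exact ⟨L, hL, fun L' h1 h2 => le_antisymm (hm h1 h2) h2⟩
  obtain ⟨qp, hq⟩ := hLmem
  replace hq : walkWeight wt qp.1 = L := hq
  refine ⟨qp.1, le_antisymm ?_ (gDist_le hpos qp.1)⟩
  have hne : {L : ℝ | ∃ p : G.Walk u v, walkWeight wt p = L}.Nonempty := ⟨_, qp.1, rfl⟩
  apply le_csInf hne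
  rintro M ⟨r, rfl⟩
  have h1 : walkWeight wt r.bypass ≤ walkWeight wt r := walkWeight_bypass_le hpos r
  have h2 : walkWeight wt qp.1 ≤ walkWeight wt r.bypass := by
    rw [hq]
    by_contra hlt
    push_neg at hlt
    have := hLmin _ ⟨⟨r.bypass, r.bypass_isPath⟩, rfl⟩ hlt.le
    simp only [id] at this
    exact absurd this (ne_of_gt hlt)
  linarith

/-- Triangle-type inequality along a prefix walk. -/
lemma gDist_le_walk_add (hpos : ∀ u v : V, G.Adj u v → 0 < wt u v)
    (hconn : G.Connected) {a b : V} (p : G.Walk a b) (w : V) :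
    gDist G wt a w ≤ walkWeight wt p + gDist G wt b w := by
  obtain ⟨q, hq⟩ := exists_shortest_walk hpos hconn b w
  calc gDist G wt a w ≤ walkWeight wt (p.append q) := gDist_le hpos _
    _ = walkWeight wt p + gDist G wt b w := by rw [walkWeight_append, hq]

lemma gDist_self (hpos : ∀ u v : V, G.Adj u v → 0 < wt u v)
    (hconn : G.Connected) (u : V) : gDist G wt u u = 0 :=
  le_antisymm (by simpa [walkWeight] using gDist_le hpos (SimpleGraph.Walk.nil : G.Walk u u))
    (gDist_nonneg hpos hconn u u)

lemma eq_of_gDist_eq_zero (hpos : ∀ u v : V, G.Adj u v → 0 < wt u v)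
    (hconn : G.Connected) {u v : V} (h : gDist G wt u v = 0) : u = v := by
  obtain ⟨p, hp⟩ := exists_shortest_walk hpos hconn u v
  cases p with
  | nil => rfl
  | cons hadj q =>
    exfalso
    rw [h] at hp
    simp only [walkWeight] at hp
    have h1 := hpos _ _ hadj
    have h2 := walkWeight_nonneg hpos q
    linarith

end Aux

/-- Voronoi cells with index tie-breaking are connected: assign each vertex `v`
of a connected, positively weighted finite graph to the center `c (assign v)`
minimizing `d_G(v, c i)`, ties broken by the smallest index.  Then each vertex
has a shortest path to its assigned center all of whose vertices are assigned
to the same center; consequently each assignment class induces a connected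
subgraph. -/
theorem voronoi_cells_connected {V : Type*} [Fintype V] [DecidableEq V]
    (G : SimpleGraph V) (wt : V → V → ℝ)
    (hpos : ∀ u v : V, G.Adj u v → 0 < wt u v)
    (hsym : ∀ u v : V, wt u v = wt v u)
    (hconn : G.Connected)
    (m : ℕ) (c : Fin m → V) (hc : Function.Injective c)
    (assign : V → Fin m)
    (hmin : ∀ v : V, ∀ j : Fin m,
      gDist G wt v (c (assign v)) ≤ gDist G wt v (c j))
    (htie : ∀ v : V, ∀ j : Fin m,
      gDist G wt v (c j) = gDist G wt v (c (assign v)) → assign v ≤ j) :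
    (∀ v : V, ∃ p : G.Walk v (c (assign v)),
      walkWeight wt p = gDist G wt v (c (assign v)) ∧
      ∀ u ∈ p.support, assign u = assign v) ∧
    ∀ j : Fin m, (G.induce {v | assign v = j}).Connected := by
  have main : ∀ v : V, ∃ p : G.Walk v (c (assign v)),
      walkWeight wt p = gDist G wt v (c (assign v)) ∧
      ∀ u ∈ p.support, assign u = assign v := by
    intro v
    obtain ⟨p, hp⟩ := exists_shortest_walk hpos hconn v (c (assign v))
    refine ⟨p, hp, ?_⟩
    intro u hu
    -- split p at u
    have hsplit : walkWeight wt (p.takeUntil u hu) + walkWeight wt (p.dropUntil u hu)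
        = gDist G wt v (c (assign v)) := by
      rw [← walkWeight_append, p.take_spec hu, hp]
    have h1 : gDist G wt u (c (assign v)) ≤ walkWeight wt (p.dropUntil u hu) :=
      gDist_le hpos _
    have h2 : gDist G wt u (c (assign u)) ≤ gDist G wt u (c (assign v)) := hmin u (assign v)
    have h3 : gDist G wt v (c (assign u)) ≤ walkWeight wt (p.takeUntil u hu) + gDist G wt u (c (assign u)) :=
      gDist_le_walk_add hpos hconn _ _
    have h4 : gDist G wt v (c (assign v)) ≤ gDist G wt v (c (assign u)) := hmin v (assign u)
    -- chain forces equalities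
    have heqv : gDist G wt v (c (assign u)) = gDist G wt v (c (assign v)) := by linarith
    have hik : assign v ≤ assign u := htie v (assign u) heqv
    have heqd : gDist G wt u (c (assign v)) = gDist G wt u (c (assign u)) := by linarith
    have hki : assign u ≤ assign v := htie u (assign v) heqd
    exact le_antisymm hki hik
  refine ⟨main, ?_⟩
  intro j
  -- c j is assigned to j
  have hcj : assign (c j) = j := by
    have h0 : gDist G wt (c j) (c j) = 0 := gDist_self hpos hconn _
    have h1 : gDist G wt (c j) (c (assign (c j))) ≤ 0 := h0 ▸ hmin (c j) j
    have h2 : gDist G wt (c j) (c (assign (c j))) = 0 :=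
      le_antisymm h1 (gDist_nonneg hpos hconn _ _)
    exact (hc (eq_of_gDist_eq_zero hpos hconn h2)).symm
  -- reachability lemma inside the induced graph
  have reach : ∀ {a b : V} (p : G.Walk a b) (ha : assign a = j)
      (hall : ∀ u ∈ p.support, assign u = j),
      (G.induce {v | assign v = j}).Reachable ⟨a, ha⟩
        ⟨b, hall b p.end_mem_support⟩ := by
    intro a b p
    induction p with
    | nil => intro ha _; rfl
    | @cons a a' b hadj q ih =>
      intro ha hall
      have ha' : assign a' = j := hall a' (by simp)
      have hq : ∀ u ∈ q.support, assign u = j := fun u hu =>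
        hall u (by simp [hu])
      exact (SimpleGraph.Adj.reachable (by exact hadj :
        (G.induce {v | assign v = j}).Adj ⟨a, ha⟩ ⟨a', ha'⟩)).trans (ih ha' hq)
  have key : ∀ x (hx : assign x = j),
      (G.induce {v | assign v = j}).Reachable ⟨x, hx⟩ ⟨c j, hcj⟩ := by
    intro x hx
    obtain ⟨px, hpx, hallx⟩ := main x
    have rx := reach px hx (fun u hu => (hallx u hu).trans hx)
    have hend : (⟨c (assign x), (hallx _ px.end_mem_support).trans hx⟩ :
        {v | assign v = j}) = ⟨c j, hcj⟩ := Subtype.ext (by simp only; rw [hx])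
    exact hend ▸ rx
  rw [SimpleGraph.connected_iff]
  constructor
  · rintro ⟨x, hx⟩ ⟨y, hy⟩
    exact (key x hx).trans (key y hy).symm
  · exact ⟨⟨c j, hcj⟩⟩
end
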